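/- arXiv:2506.10218 — 2 statements merged into one kernel-verified Lean document; each statement's English description precedes it below -/
import Mathlib

section
/- Let e ≥ 1 be a natural number, 0 < ε ≤ 1/2, and x a real with x^{1-ε} > e. Then ln(ln(x/e)) - ln(ln(x^{1-ε}/e)) ≤ -ln(1-ε) + ε · (2·ln e)/(ln x - 2·ln e), provided ln x > 2·ln e. -/
/-! With `c = ln e`, `L = ln x` and `A = (1-ε)L - c`, the left side plus `ln(1-ε)` is the logarithm
of `(1-ε)(L-c)/A = 1 + εc/A`, hence at most `εc/A` by `ln t ≤ t - 1`. Since `ε ≤ 1/2`, we have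
`2A ≥ L - 2c`, which turns `εc/A` into `2εc/(L - 2c)`. -/

open Real

/-- For negative bases Mathlib's `x ^ y` is `exp (log x * y) * cos (y * π)`, and the cosine factor
is nonpositive for these exponents. -/
lemma Real.rpow_nonpos_of_neg {x y : ℝ} (hx : x < 0) (hy₁ : 1 / 2 ≤ y) (hy₂ : y ≤ 3 / 2) :
    x ^ y ≤ 0 := by
  rw [rpow_def_of_neg hx]
  have hcos : cos (y * π) ≤ 0 :=
    cos_nonpos_of_pi_div_two_le_of_le (by nlinarith [pi_pos]) (by nlinarith [pi_pos])
  exact mul_nonpos_of_nonneg_of_nonpos (exp_pos _).le hcos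

lemma Real.pos_of_lt_rpow {x y a : ℝ} (ha : 0 ≤ a) (h : a < x ^ y) (hy₁ : 1 / 2 ≤ y)
    (hy₂ : y ≤ 3 / 2) : 0 < x := by
  rcases lt_trichotomy x 0 with hx | rfl | hx
  · linarith [rpow_nonpos_of_neg hx hy₁ hy₂]
  · rw [zero_rpow (by linarith)] at h
    linarith
  · exact hx

lemma log_sub_log_le_of_two_mul_lt {c L ε : ℝ} (hc : 0 ≤ c) (hε : 0 ≤ ε) (hε₂ : ε ≤ 1 / 2)
    (hcL : c < (1 - ε) * L) (h2cL : 2 * c < L) :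
    log (L - c) - log ((1 - ε) * L - c) ≤ -log (1 - ε) + ε * (2 * c) / (L - 2 * c) := by
  set A := (1 - ε) * L - c
  have hA : 0 < A := by linarith
  have hε₁ : 0 < 1 - ε := by linarith
  have hLc : 0 < L - c := by linarith
  have hden : 0 < L - 2 * c := by linarith
  have hlog : log ((1 - ε) * (L - c) / A) = log (1 - ε) + log (L - c) - log A := by
    rw [log_div (by positivity) hA.ne', log_mul hε₁.ne' hLc.ne']
  have hratio : (1 - ε) * (L - c) / A - 1 = ε * c / A := by
    field_simp
    ring
  have hL : 0 ≤ (1 - 2 * ε) * L := mul_nonneg (by linarith) (by nlinarith)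
  have hcompare : ε * c / A ≤ ε * (2 * c) / (L - 2 * c) := by
    rw [div_le_div_iff₀ hA hden]
    nlinarith [mul_nonneg (mul_nonneg hε hc) hL]
  linarith [log_le_sub_one_of_pos (show 0 < (1 - ε) * (L - c) / A by positivity)]

/-- For a natural `e ≥ 1`, `0 < ε ≤ 1/2`, and real `x` with `x^(1-ε) > e` and
`ln x > 2 ln e`, one has
`ln(ln(x/e)) - ln(ln(x^(1-ε)/e)) ≤ -ln(1-ε) + ε·(2 ln e)/(ln x - 2 ln e)`. -/
theorem log_log_diff_bound (e : ℕ) (he : 1 ≤ e) (ε : ℝ) (hε : 0 < ε) (hε2 : ε ≤ 1/2)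
    (x : ℝ) (hx : (e : ℝ) < x ^ (1 - ε)) (hlog : 2 * Real.log e < Real.log x) :
    Real.log (Real.log (x / e)) - Real.log (Real.log (x ^ (1 - ε) / e))
      ≤ -Real.log (1 - ε) + ε * (2 * Real.log e) / (Real.log x - 2 * Real.log e) := by
  have he₀ : (0 : ℝ) < e := by exact_mod_cast he
  have hx₀ : 0 < x := pos_of_lt_rpow he₀.le hx (by linarith) (by linarith)
  have hlog_rpow : log (x ^ (1 - ε)) = (1 - ε) * log x := log_rpow hx₀ _
  have hcL : log e < (1 - ε) * log x := hlog_rpow ▸ log_lt_log he₀ hx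
  rw [log_div hx₀.ne' he₀.ne', log_div (rpow_pos_of_pos hx₀ _).ne' he₀.ne', hlog_rpow]
  exact log_sub_log_le_of_two_mul_lt (log_natCast_nonneg e) hε.le hε2 hcL hlog
end

section
/- Call a set B ⊆ ℕ primitive if for all b, b' ∈ B, b ∣ b' implies b = b'. Let (e_i)_{i≥1} be a sequence of distinct natural numbers such that the set E = {e_i : i ≥ 1} is primitive, and let (A_i)_{i≥1} be pairwise disjoint sets of primes such that every p ∈ A_i satisfies p > e_j for all j ≤ i and p > e_i. Suppose moreover each A_i consists of primes congruent to 2^i + 1 modulo 2^{i+1} (so the A_i are automatically disjoint) and min A_i > max{e_1,…,e_i}. Then the set B = ⋃_{i≥1} e_i·A_i = {e_i·p : i ≥ 1, p ∈ A_i} is primitive. -/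
/-! If `e_i p ∣ e_j q` with `e_i < p` and `e_j < q` prime, then `e_i ∣ e_j`: otherwise `q ∣ e_i`,
so `q < p`, while cancelling `q` leaves `p ∣ e_j`, so `p < q`. Primitivity of `E` then forces
`e_i = e_j`, and cancelling gives `p = q`. -/

/-- A set `B ⊆ ℕ` is primitive if `b ∣ b'` for `b, b' ∈ B` implies `b = b'`. -/
def Primitive (B : Set ℕ) : Prop := ∀ b ∈ B, ∀ b' ∈ B, b ∣ b' → b = b'

theorem Nat.dvd_of_mul_dvd_mul_prime {a b p q : ℕ} (hq : q.Prime) (hap : a < p) (hbq : b < q)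
    (h : a * p ∣ b * q) : a ∣ b := by
  rcases Nat.eq_zero_or_pos b with rfl | hb
  · exact dvd_zero a
  have hqa : ¬ q ∣ a := by
    rintro ⟨k, rfl⟩
    have hk : k ≠ 0 := by
      rintro rfl
      simp only [mul_zero, zero_mul, zero_dvd_iff, mul_eq_zero] at h
      omega
    have hpb : p ∣ b := by
      have : q * (k * p) ∣ q * b := by simpa only [mul_assoc, mul_comm b q] using h
      exact (dvd_mul_left p k).trans ((Nat.mul_dvd_mul_iff_left hq.pos).mp this)
    have hqp : q < p := lt_of_le_of_lt (Nat.le_mul_of_pos_right q (Nat.pos_of_ne_zero hk)) hap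
    have hpq : p < q := lt_of_le_of_lt (Nat.le_of_dvd hb hpb) hbq
    exact lt_asymm hqp hpq
  exact (Nat.Coprime.symm ((Nat.Prime.coprime_iff_not_dvd hq).mpr hqa)).dvd_of_dvd_mul_right
    ((dvd_mul_right a p).trans h)

theorem Nat.mul_prime_eq_of_dvd {a p q : ℕ} (hp : p.Prime) (hq : q.Prime)
    (h : a * p ∣ a * q) : a * p = a * q := by
  rcases Nat.eq_zero_or_pos a with rfl | ha
  · simp
  rw [(Nat.prime_dvd_prime_iff_eq hp hq).mp ((Nat.mul_dvd_mul_iff_left ha).mp h)]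

theorem Primitive.mul_prime_eq_of_dvd {E : Set ℕ} (hE : Primitive E) {a b p q : ℕ}
    (ha : a ∈ E) (hb : b ∈ E) (hp : p.Prime) (hq : q.Prime) (hap : a < p) (hbq : b < q)
    (h : a * p ∣ b * q) : a * p = b * q := by
  obtain rfl : a = b := hE a ha b hb (Nat.dvd_of_mul_dvd_mul_prime hq hap hbq h)
  exact Nat.mul_prime_eq_of_dvd hp hq h

theorem union_rescaled_primes_primitive_general (e : ℕ → ℕ) (A : ℕ → Set ℕ)
    (hE : Primitive {n | ∃ i, 1 ≤ i ∧ e i = n})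
    (hprime : ∀ i, 1 ≤ i → ∀ p ∈ A i, Nat.Prime p)
    (hgt : ∀ i, 1 ≤ i → ∀ p ∈ A i, ∀ j, 1 ≤ j → j ≤ i → e j < p) :
    Primitive {n | ∃ i, 1 ≤ i ∧ ∃ p ∈ A i, n = e i * p} := by
  rintro _ ⟨i, hi, p, hp, rfl⟩ _ ⟨j, hj, q, hq, rfl⟩ hdvd
  exact hE.mul_prime_eq_of_dvd ⟨i, hi, rfl⟩ ⟨j, hj, rfl⟩ (hprime i hi p hp) (hprime j hj q hq)
    (hgt i hi p hp i hi le_rfl) (hgt j hj q hq j hj le_rfl) hdvd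

/-- If `(e_i)_{i≥1}` are distinct positive naturals forming a primitive set, and the
`A_i` are sets of primes congruent to `2^i + 1` mod `2^(i+1)` (hence pairwise disjoint),
every `p ∈ A_i` exceeding every `e_j` with `j ≤ i`, then
`B = ⋃_{i≥1} e_i·A_i` is primitive. -/
theorem union_rescaled_primes_primitive (e : ℕ → ℕ) (A : ℕ → Set ℕ)
    (hpos : ∀ i, 1 ≤ i → 1 ≤ e i)
    (hinj : Function.Injective e)
    (hE : Primitive {n | ∃ i, 1 ≤ i ∧ e i = n})
    (hprime : ∀ i, 1 ≤ i → ∀ p ∈ A i, Nat.Prime p)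
    (hcong : ∀ i, 1 ≤ i → ∀ p ∈ A i, p % 2 ^ (i + 1) = (2 ^ i + 1) % 2 ^ (i + 1))
    (hgt : ∀ i, 1 ≤ i → ∀ p ∈ A i, ∀ j, 1 ≤ j → j ≤ i → e j < p) :
    Primitive {n | ∃ i, 1 ≤ i ∧ ∃ p ∈ A i, n = e i * p} :=
  union_rescaled_primes_primitive_general e A hE hprime hgt
end
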